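/- Positive integers n−1 ≥ d_1 ≥ d_2 ≥ ⋯ ≥ d_n are the vertex degree sequence of a tricyclic graph (a connected simple graph on n vertices with n+2 edges) if and only if n ≥ 4, Σ_{i=1}^n d_i = 2(n+2), and one of the following holds: (1) n ≥ 5 and at least five of the d_i are ≥ 2 (i.e. d_5 ≥ 2); (2) at least four of the d_i are ≥ 3 (i.e. d_4 ≥ 3). -/

import Mathlib

/-!
Necessity: the handshake lemma gives `∑ dᵢ = 2 (n + 2)`, and `n + 2 ≤ n.choose 2` gives `n ≥ 4`.
Counting the edges leaving the three vertices of largest degree gives the Erdős–Gallai inequality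
`d₀ + d₁ + d₂ ≤ 6 + ∑_{i ≥ 3} dᵢ`; when `n = 4` or `d₄ ≤ 1` the right-hand side is at most
`6 + d₃ + (n - 4)`, and the degree sum then forces `d₃ ≥ 3`.

Sufficiency is by induction on `n`. If `d_{n-1} = 1`, drop it and lower by one the last entry equal
to `d₀`: the shorter sequence still satisfies the criterion, and a pendant vertex attached to that
entry realises `d`. If all `dᵢ ≥ 2`, the degree sum forces `dᵢ = 2` for `i ≥ 4`, so
`(d₀, d₁, d₂, d₃)` is one of five shapes, each realised by an explicit graph on `d₀ + 1` vertices;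
subdividing edges then supplies the remaining vertices of degree `2`.
-/

open SimpleGraph Finset

/-- `d` (0-indexed) is the degree sequence of `G`: some relabelling of the
vertices realizes the degrees `d 0, …, d (n-1)`. -/
def IsDegreeSequence {n : ℕ} (G : SimpleGraph (Fin n)) (d : ℕ → ℕ) : Prop :=
  ∃ σ : Equiv.Perm (Fin n), ∀ i : Fin n, (G.neighborSet (σ i)).ncard = d (i : ℕ)

section Sequences

variable {d : ℕ → ℕ}

theorem Finset.sum_range_le_sum_range_add {k n c : ℕ} (hk : k ≤ n)
    (h : ∀ i, k ≤ i → i < n → d i ≤ c) :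
    ∑ i ∈ range n, d i ≤ ∑ i ∈ range k, d i + (n - k) * c := by
  rw [← sum_range_add_sum_Ico d hk, ← Nat.card_Ico k n]
  gcongr
  exact sum_le_card_nsmul _ _ _ fun i hi => h i (mem_Ico.1 hi).1 (mem_Ico.1 hi).2

theorem Finset.sum_range_add_le_sum_range {k n c : ℕ} (hk : k ≤ n)
    (h : ∀ i, k ≤ i → i < n → c ≤ d i) :
    ∑ i ∈ range k, d i + (n - k) * c ≤ ∑ i ∈ range n, d i := by
  rw [← sum_range_add_sum_Ico d hk, ← Nat.card_Ico k n]
  gcongr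
  exact card_nsmul_le_sum _ _ _ fun i hi => h i (mem_Ico.1 hi).1 (mem_Ico.1 hi).2

theorem Finset.sum_range_update_sub_one_add_one {m j : ℕ} (hj : j < m) (hdj : 1 ≤ d j) :
    ∑ i ∈ range m, Function.update d j (d j - 1) i + 1 = ∑ i ∈ range m, d i := by
  rw [sum_update_of_mem (mem_range.2 hj), sum_eq_add_sum_sdiff_singleton_of_mem (mem_range.2 hj)]
  omega

theorem Function.update_sub_one_antitone {n j : ℕ}
    (hanti : ∀ i k, i ≤ k → k < n → d k ≤ d i) (hlt : ∀ k, j < k → k < n → d k < d j) :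
    ∀ i k, i ≤ k → k < n → Function.update d j (d j - 1) k ≤ Function.update d j (d j - 1) i := by
  intro i k hik hk
  rcases eq_or_ne k j with rfl | hkj
  · rcases eq_or_ne i k with rfl | hik'
    · rfl
    · rw [Function.update_self, Function.update_of_ne hik']
      have := hanti i k hik hk
      omega
  · rw [Function.update_of_ne hkj]
    rcases eq_or_ne i j with rfl | hij
    · rw [Function.update_self]
      have := hlt k (by omega) hk
      omega
    · rw [Function.update_of_ne hij]
      exact hanti i k hik hk

end Sequences

theorem Fin.ncard_eq_ncard_preimage_castSucc_add {m : ℕ} (s : Set (Fin (m + 1)))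
    [Decidable (Fin.last m ∈ s)] :
    s.ncard = (Fin.castSucc ⁻¹' s).ncard + if Fin.last m ∈ s then 1 else 0 := by
  have himage : Fin.castSucc '' (Fin.castSucc ⁻¹' s) = s \ {Fin.last m} := by
    ext x
    induction x using Fin.lastCases <;> simp [Fin.castSucc_ne_last]
  rw [← Set.ncard_image_of_injective _ (Fin.castSucc_injective m), himage]
  split_ifs with h
  · exact (Set.ncard_sdiff_singleton_add_one h).symm
  · rw [Set.sdiff_singleton_eq_self h, add_zero]

namespace SimpleGraph

theorem ncard_neighborSet_eq_degree {V : Type*} (G : SimpleGraph V) (v : V)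
    [Fintype (G.neighborSet v)] : (G.neighborSet v).ncard = G.degree v := by
  rw [← card_neighborSet_eq_degree, ← Nat.card_eq_fintype_card, Nat.card_coe_set_eq]

section ErdosGallai

variable {V : Type*} [Fintype V] [DecidableEq V] (G : SimpleGraph V) [DecidableRel G.Adj]

theorem sum_degree_le_card_mul_add_sum_degree_compl (A : Finset V) :
    ∑ v ∈ A, G.degree v ≤ #A * (#A - 1) + ∑ v ∈ Aᶜ, G.degree v := by
  have split (v : V) : G.degree v = #{u ∈ A | G.Adj v u} + #{u ∈ Aᶜ | G.Adj v u} := by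
    rw [← card_union_of_disjoint (disjoint_filter_filter disjoint_compl_right), ← filter_union,
      union_compl, ← card_neighborFinset_eq_degree, neighborFinset_eq_filter]
  have inside (v : V) (hv : v ∈ A) : #{u ∈ A | G.Adj v u} ≤ #A - 1 := by
    rw [← card_erase_of_mem hv]
    exact card_le_card fun u hu => by
      simp only [mem_filter] at hu
      exact mem_erase.2 ⟨hu.2.ne', hu.1⟩
  have across : ∑ v ∈ A, #{u ∈ Aᶜ | G.Adj v u} ≤ ∑ u ∈ Aᶜ, G.degree u := by
    have := sum_card_bipartiteAbove_eq_sum_card_bipartiteBelow G.Adj (s := A) (t := Aᶜ)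
    unfold bipartiteAbove bipartiteBelow at this
    rw [this]
    refine sum_le_sum fun u _ => ?_
    rw [← card_neighborFinset_eq_degree]
    exact card_le_card fun v hv => by simpa using (mem_filter.1 hv).2.symm
  calc ∑ v ∈ A, G.degree v
      = ∑ v ∈ A, #{u ∈ A | G.Adj v u} + ∑ v ∈ A, #{u ∈ Aᶜ | G.Adj v u} := by
        rw [← sum_add_distrib]
        exact sum_congr rfl fun v _ => split v
    _ ≤ ∑ _v ∈ A, (#A - 1) + ∑ u ∈ Aᶜ, G.degree u := add_le_add (sum_le_sum inside) across
    _ = #A * (#A - 1) + ∑ u ∈ Aᶜ, G.degree u := by rw [sum_const, smul_eq_mul]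

theorem two_mul_sum_degree_le (A : Finset V) :
    2 * ∑ v ∈ A, G.degree v ≤ #A * (#A - 1) + 2 * #G.edgeFinset := by
  have := G.sum_degree_le_card_mul_add_sum_degree_compl A
  have := sum_add_sum_compl A fun v => G.degree v
  rw [sum_degrees_eq_twice_card_edges] at this
  omega

end ErdosGallai

theorem ncard_neighborSet_deleteEdges_add {V : Type*} [Fintype V] [DecidableEq V]
    {G : SimpleGraph V} {u v : V} (huv : G.Adj u v) (a : V) :
    ((G.deleteEdges {s(u, v)}).neighborSet a).ncard + (if a ∈ ({u, v} : Finset V) then 1 else 0) =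
      (G.neighborSet a).ncard := by
  by_cases hau : a = u
  · subst hau
    have : (G.deleteEdges {s(a, v)}).neighborSet a = G.neighborSet a \ {v} := by
      ext x; simp [huv.ne]
    rw [this, if_pos (by simp)]
    exact Set.ncard_sdiff_singleton_add_one huv
  by_cases hav : a = v
  · subst hav
    have : (G.deleteEdges {s(u, a)}).neighborSet a = G.neighborSet a \ {u} := by
      ext x; simp [hau]
    rw [this, if_pos (by simp)]
    exact Set.ncard_sdiff_singleton_add_one huv.symm
  · have : (G.deleteEdges {s(u, v)}).neighborSet a = G.neighborSet a := by
      ext x; simp [hau, hav]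
    simp [this, hau, hav]

def HasDegrees {n : ℕ} (G : SimpleGraph (Fin n)) (d : ℕ → ℕ) : Prop :=
  ∀ i : Fin n, (G.neighborSet i).ncard = d i

section HasDegrees

variable {n : ℕ} {G : SimpleGraph (Fin n)} {d : ℕ → ℕ}

theorem hasDegrees_of_degree [DecidableRel G.Adj] (h : ∀ i : Fin n, G.degree i = d i) :
    G.HasDegrees d :=
  fun i => (G.ncard_neighborSet_eq_degree i).trans (h i)

theorem HasDegrees.congr {e : ℕ → ℕ} (hG : G.HasDegrees d) (h : ∀ i < n, d i = e i) :
    G.HasDegrees e :=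
  fun i => (hG i).trans (h i i.isLt)

end HasDegrees

variable {m : ℕ}

def addVertex (G : SimpleGraph (Fin m)) (S : Finset (Fin m)) : SimpleGraph (Fin (m + 1)) :=
  G.map Fin.castSuccEmb ⊔ fromEdgeSet ((fun a : Fin m => s(Fin.last m, a.castSucc)) '' S)

def subdivide (G : SimpleGraph (Fin m)) (u v : Fin m) : SimpleGraph (Fin (m + 1)) :=
  (G.deleteEdges {s(u, v)}).addVertex {u, v}

variable {G : SimpleGraph (Fin m)} {S : Finset (Fin m)} {d : ℕ → ℕ}

@[simp] theorem addVertex_adj_castSucc {a b : Fin m} :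
    (G.addVertex S).Adj a.castSucc b.castSucc ↔ G.Adj a b := by
  simp only [addVertex, sup_adj, map_adj, fromEdgeSet_adj, Set.mem_image, mem_coe, Sym2.eq_iff]
  simp [(Fin.castSucc_ne_last _).symm]

@[simp] theorem addVertex_adj_last {a : Fin m} :
    (G.addVertex S).Adj (Fin.last m) a.castSucc ↔ a ∈ S := by
  simp only [addVertex, sup_adj, map_adj, fromEdgeSet_adj, Set.mem_image, mem_coe, Sym2.eq_iff]
  simp [(Fin.castSucc_ne_last _).symm]

theorem ncard_neighborSet_addVertex_castSucc (a : Fin m) :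
    ((G.addVertex S).neighborSet a.castSucc).ncard =
      (G.neighborSet a).ncard + if a ∈ S then 1 else 0 := by
  classical
  rw [Fin.ncard_eq_ncard_preimage_castSucc_add]
  simp [neighborSet, adj_comm _ a.castSucc (Fin.last m)]

theorem ncard_neighborSet_addVertex_last :
    ((G.addVertex S).neighborSet (Fin.last m)).ncard = #S := by
  classical
  rw [Fin.ncard_eq_ncard_preimage_castSucc_add]
  simp [neighborSet]

theorem connected_of_reachable_castSucc {H : SimpleGraph (Fin (m + 1))} (hG : G.Connected)
    (hH : ∀ a b, G.Adj a b → H.Reachable a.castSucc b.castSucc) {w : Fin m}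
    (hw : H.Adj (Fin.last m) w.castSucc) : H.Connected := by
  have reach (a b : Fin m) : H.Reachable a.castSucc b.castSucc := by
    simp only [reachable_iff_reflTransGen] at hH ⊢
    exact Relation.ReflTransGen.lift' _ hH a b <|
      (reachable_iff_reflTransGen a b).1 (hG.preconnected a b)
  rw [connected_iff_exists_forall_reachable]
  exact ⟨Fin.last m, Fin.lastCases (Reachable.refl _) fun a => hw.reachable.trans (reach w a)⟩

theorem Connected.addVertex (hG : G.Connected) {w : Fin m} (hw : w ∈ S) :
    (G.addVertex S).Connected :=
  connected_of_reachable_castSucc hG (fun _ _ h => (addVertex_adj_castSucc.2 h).reachable)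
    (addVertex_adj_last.2 hw)

theorem Connected.subdivide (hG : G.Connected) {u v : Fin m} : (G.subdivide u v).Connected := by
  have hu : (G.subdivide u v).Adj (Fin.last m) u.castSucc := addVertex_adj_last.2 (by simp)
  have hv : (G.subdivide u v).Adj (Fin.last m) v.castSucc := addVertex_adj_last.2 (by simp)
  refine connected_of_reachable_castSucc hG (fun a b hab => ?_) hu
  by_cases he : s(a, b) = s(u, v)
  · rcases Sym2.eq_iff.1 he with ⟨rfl, rfl⟩ | ⟨rfl, rfl⟩
    · exact hu.symm.reachable.trans hv.reachable
    · exact hv.symm.reachable.trans hu.reachable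
  · exact (addVertex_adj_castSucc.2 (deleteEdges_adj.2 ⟨hab, he⟩)).reachable

theorem HasDegrees.addLeaf {w : Fin m} (hG : G.HasDegrees (Function.update d w (d w - 1)))
    (hw : 1 ≤ d w) (hm : d m = 1) : (G.addVertex {w}).HasDegrees d := by
  refine Fin.lastCases ?_ fun i => ?_
  · rw [ncard_neighborSet_addVertex_last, card_singleton]
    exact hm.symm
  · rw [ncard_neighborSet_addVertex_castSucc, hG i]
    by_cases hi : i = w
    · subst hi
      simp
      omega
    · simp [hi, Fin.val_ne_of_ne hi]

theorem HasDegrees.subdivide (hG : G.HasDegrees d) {u v : Fin m} (huv : G.Adj u v)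
    (hm : d m = 2) : (G.subdivide u v).HasDegrees d := by
  classical
  refine Fin.lastCases ?_ fun i => ?_
  · rw [SimpleGraph.subdivide, ncard_neighborSet_addVertex_last, card_pair huv.ne]
    exact hm.symm
  · rw [SimpleGraph.subdivide, ncard_neighborSet_addVertex_castSucc,
      ncard_neighborSet_deleteEdges_add huv]
    exact hG i

theorem exists_connected_hasDegrees_of_eq_two {N n : ℕ} (hN : 2 ≤ N) (hNn : N ≤ n)
    {B : SimpleGraph (Fin N)} (hB : B.Connected) (hBd : B.HasDegrees d)
    (htwo : ∀ i, N ≤ i → i < n → d i = 2) :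
    ∃ G : SimpleGraph (Fin n), G.Connected ∧ G.HasDegrees d := by
  induction n, hNn using Nat.le_induction with
  | base => exact ⟨B, hB, hBd⟩
  | succ k hk ih =>
    obtain ⟨G, hG, hGd⟩ := ih fun i hi hik => htwo i hi (by omega)
    have : Nontrivial (Fin k) := Fin.nontrivial_iff_two_le.2 (by omega)
    obtain ⟨v, hv⟩ := hG.preconnected.exists_adj_of_nontrivial ⟨0, by omega⟩
    exact ⟨G.subdivide _ v, hG.subdivide, hGd.subdivide hv (htwo k hk (by omega))⟩

end SimpleGraph

section DegreeSequence

variable {n : ℕ} {G : SimpleGraph (Fin n)} {d : ℕ → ℕ}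

theorem SimpleGraph.HasDegrees.isDegreeSequence (hG : G.HasDegrees d) : IsDegreeSequence G d :=
  ⟨1, hG⟩

theorem IsDegreeSequence.sum_range_eq (h : IsDegreeSequence G d) :
    ∑ i ∈ range n, d i = 2 * G.edgeSet.ncard := by
  classical
  obtain ⟨σ, hσ⟩ := h
  rw [← coe_edgeFinset, Set.ncard_coe_finset, ← Fin.sum_univ_eq_sum_range,
    ← sum_degrees_eq_twice_card_edges, ← Equiv.sum_comp σ fun v => G.degree v]
  exact sum_congr rfl fun i _ => by rw [← hσ i, ncard_neighborSet_eq_degree]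

theorem IsDegreeSequence.two_mul_sum_range_le (h : IsDegreeSequence G d) {k : ℕ} (hk : k ≤ n) :
    2 * ∑ i ∈ range k, d i ≤ k * (k - 1) + 2 * G.edgeSet.ncard := by
  classical
  obtain ⟨σ, hσ⟩ := h
  have := G.two_mul_sum_degree_le (univ.map ((Fin.castLEEmb hk).trans σ.toEmbedding))
  rw [sum_map, card_map, card_univ, Fintype.card_fin] at this
  rw [← coe_edgeFinset, Set.ncard_coe_finset, ← Fin.sum_univ_eq_sum_range]
  convert this using 3 with i
  rw [← ncard_neighborSet_eq_degree]
  exact (hσ (Fin.castLE hk i)).symm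

theorem large_of_sum_range_three_le (hmono : ∀ i j, i ≤ j → j < n → d j ≤ d i) (hn : 4 ≤ n)
    (hsum : ∑ i ∈ range n, d i = 2 * (n + 2)) (h3 : d 0 + d 1 + d 2 ≤ n + 5) :
    (5 ≤ n ∧ 2 ≤ d 4) ∨ 3 ≤ d 3 := by
  refine or_iff_not_imp_left.2 fun h4 => ?_
  have := sum_range_le_sum_range_add (c := 1) hn fun i hi hin =>
    (hmono 4 i hi hin).trans (by omega)
  simp only [sum_range_succ, sum_range_zero] at this
  omega

theorem tricyclic_conditions_of_isDegreeSequence (hmono : ∀ i j, i ≤ j → j < n → d j ≤ d i)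
    (hE : G.edgeSet.ncard = n + 2) (hG : IsDegreeSequence G d) :
    4 ≤ n ∧ ∑ i ∈ range n, d i = 2 * (n + 2) ∧ ((5 ≤ n ∧ 2 ≤ d 4) ∨ 3 ≤ d 3) := by
  classical
  have hsum := hG.sum_range_eq
  rw [hE] at hsum
  have hn : 4 ≤ n := by
    have hchoose := G.card_edgeFinset_le_card_choose_two
    rw [← Set.ncard_coe_finset, coe_edgeFinset, hE, Fintype.card_fin] at hchoose
    by_contra! hn
    interval_cases n <;> simp at hchoose
  have h3 := hG.two_mul_sum_range_le (k := 3) (by omega)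
  simp only [sum_range_succ, sum_range_zero, hE] at h3
  exact ⟨hn, hsum, large_of_sum_range_three_le hmono hn hsum (by omega)⟩

end DegreeSequence

structure TricyclicCriterion (n : ℕ) (d : ℕ → ℕ) : Prop where
  one_le : ∀ i, i < n → 1 ≤ d i
  le_sub_one : ∀ i, i < n → d i ≤ n - 1
  antitone : ∀ i j, i ≤ j → j < n → d j ≤ d i
  four_le : 4 ≤ n
  sum_eq : ∑ i ∈ range n, d i = 2 * (n + 2)
  large : (5 ≤ n ∧ 2 ≤ d 4) ∨ 3 ≤ d 3

def baseShapes : List (ℕ × ℕ × ℕ × ℕ) :=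
  [(3, 3, 3, 3), (4, 3, 3, 2), (4, 4, 2, 2), (5, 3, 2, 2), (6, 2, 2, 2)]

def padTwo : ℕ × ℕ × ℕ × ℕ → ℕ → ℕ
  | (a, _, _, _), 0 => a
  | (_, b, _, _), 1 => b
  | (_, _, c, _), 2 => c
  | (_, _, _, e), 3 => e
  | _, _ => 2

theorem padTwo_eq_two (s : ℕ × ℕ × ℕ × ℕ) {i : ℕ} (hi : 4 ≤ i) : padTwo s i = 2 := by
  obtain ⟨k, rfl⟩ := Nat.exists_eq_add_of_le' hi
  rfl

theorem mem_baseShapes_of_sum_eq {a b c e : ℕ} (hab : b ≤ a) (hbc : c ≤ b) (hce : e ≤ c)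
    (he : 2 ≤ e) (hsum : a + b + c + e = 12) : (a, b, c, e) ∈ baseShapes := by
  simp only [baseShapes, List.mem_cons, Prod.mk.injEq, List.not_mem_nil, or_false]
  omega

abbrev friendshipGraph : SimpleGraph (Fin 7) :=
  fromEdgeSet ↑({s(0, 1), s(0, 2), s(1, 2), s(0, 3), s(0, 4), s(3, 4), s(0, 5), s(0, 6), s(5, 6)} :
    Finset (Sym2 (Fin 7)))

abbrev diamondTriangleGraph : SimpleGraph (Fin 6) :=
  fromEdgeSet ↑({s(0, 1), s(0, 2), s(1, 2), s(0, 3), s(1, 3), s(0, 4), s(0, 5), s(4, 5)} :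
    Finset (Sym2 (Fin 6)))

abbrev bookGraph : SimpleGraph (Fin 5) :=
  fromEdgeSet ↑({s(0, 1), s(0, 2), s(1, 2), s(0, 3), s(1, 3), s(0, 4), s(1, 4)} :
    Finset (Sym2 (Fin 5)))

abbrev fanGraph : SimpleGraph (Fin 5) :=
  fromEdgeSet ↑({s(0, 1), s(0, 2), s(0, 3), s(0, 4), s(1, 2), s(1, 3), s(2, 4)} :
    Finset (Sym2 (Fin 5)))

theorem exists_base : ∀ s ∈ baseShapes,
    ∃ B : SimpleGraph (Fin (s.1 + 1)), B.Connected ∧ B.HasDegrees (padTwo s) := by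
  simp only [baseShapes, List.mem_cons, List.not_mem_nil, or_false, forall_eq_or_imp, forall_eq]
  exact ⟨⟨⊤, connected_top, hasDegrees_of_degree (by decide)⟩,
    ⟨fanGraph, ⟨by decide⟩, hasDegrees_of_degree (by decide)⟩,
    ⟨bookGraph, ⟨by decide⟩, hasDegrees_of_degree (by decide)⟩,
    ⟨diamondTriangleGraph, ⟨by decide⟩, hasDegrees_of_degree (by decide)⟩,
    ⟨friendshipGraph, ⟨by decide⟩, hasDegrees_of_degree (by decide)⟩⟩

namespace TricyclicCriterion

variable {m n : ℕ} {d : ℕ → ℕ}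

theorem three_le_zero (h : TricyclicCriterion n d) : 3 ≤ d 0 := by
  by_contra! h0
  have := sum_range_le_sum_range_add (k := 0) (c := 2) (Nat.zero_le n) fun i _ hi =>
    (h.antitone 0 i (Nat.zero_le i) hi).trans (by omega)
  rw [sum_range_zero, h.sum_eq] at this
  omega

theorem sum_five_add_le (h : TricyclicCriterion n d) (hn : 5 ≤ n) :
    d 0 + d 1 + d 2 + d 3 + d 4 + (n - 5) ≤ 2 * (n + 2) := by
  have := sum_range_add_le_sum_range (c := 1) hn fun i _ hi => h.one_le i hi
  simp only [sum_range_succ, sum_range_zero, h.sum_eq] at this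
  omega

theorem mem_baseShapes (h : TricyclicCriterion n d) (h2 : ∀ i, i < n → 2 ≤ d i) :
    (d 0, d 1, d 2, d 3) ∈ baseShapes ∧ ∀ i, i < n → d i = padTwo (d 0, d 1, d 2, d 3) i := by
  have hn := h.four_le
  have h01 := h.antitone 0 1 (by omega) (by omega)
  have h12 := h.antitone 1 2 (by omega) (by omega)
  have h23 := h.antitone 2 3 (by omega) (by omega)
  have htwo (i : ℕ) (hi : 4 ≤ i) (hin : i < n) : d i = 2 := by
    have := h.antitone 4 i hi hin
    have := h2 i hin
    suffices d 4 ≤ 2 by omega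
    by_contra! h4
    have := h.antitone 3 4 (by omega) (by omega)
    have := sum_range_add_le_sum_range (k := 5) (c := 2) (by omega) fun i _ hi => h2 i hi
    simp only [sum_range_succ, sum_range_zero, h.sum_eq] at this
    omega
  have hle := sum_range_le_sum_range_add (k := 4) (c := 2) hn fun i hi hin => (htwo i hi hin).le
  have hge := sum_range_add_le_sum_range (k := 4) (c := 2) hn fun i _ hin => h2 i hin
  simp only [sum_range_succ, sum_range_zero, h.sum_eq] at hle hge
  refine ⟨mem_baseShapes_of_sum_eq h01 h12 h23 (h2 3 (by omega)) (by omega), fun i hi => ?_⟩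
  match i with
  | 0 | 1 | 2 | 3 => rfl
  | i + 4 => exact htwo (i + 4) (by omega) hi

section Leaf

variable (h : TricyclicCriterion (m + 1) d) (hleaf : d m = 1)
include h hleaf

theorem four_le_of_leaf : 4 ≤ m := by
  have := h.four_le
  rcases h.large with ⟨_, _⟩ | h3
  · omega
  · by_contra! hm
    obtain rfl : m = 3 := by omega
    omega

theorem le_sub_one_of_leaf : d 1 ≤ m - 1 := by
  have hm := h.four_le_of_leaf hleaf
  have := h.sum_five_add_le (by omega)
  have := h.le_sub_one 0 (by omega)
  have := h.antitone 0 1 (by omega) (by omega)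
  have := h.antitone 2 3 (by omega) (by omega)
  have := h.antitone 3 4 (by omega) (by omega)
  have := h.one_le 4 (by omega)
  rcases h.large with ⟨_, h4⟩ | h3
  · have : m ≠ 4 := by rintro rfl; omega
    omega
  · omega

theorem large_update {j : ℕ} (hj : d j = d 0) (hlt : ∀ k, j < k → k ≤ m → d k < d 0) :
    (5 ≤ m ∧ 2 ≤ Function.update d j (d j - 1) 4) ∨ 3 ≤ Function.update d j (d j - 1) 3 := by
  have hm := h.four_le_of_leaf hleaf
  have hd0 := h.three_le_zero
  rcases h.large with ⟨_, h4⟩ | h3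
  · have : m ≠ 4 := by rintro rfl; omega
    refine Or.inl ⟨by omega, ?_⟩
    rcases eq_or_ne 4 j with rfl | h4j
    · rw [Function.update_self]; omega
    · rwa [Function.update_of_ne h4j]
  rcases eq_or_ne 3 j with rfl | h3j
  swap
  · rw [Function.update_of_ne h3j]; exact Or.inr h3
  rw [Function.update_self, Function.update_of_ne (by omega : 4 ≠ 3)]
  by_cases hd0' : 4 ≤ d 0
  · omega
  -- now `d 0 = d 1 = d 2 = d 3 = 3 > d 4`, and the degree sum forces `d 4 = 2`
  have h4 : d 4 < 3 := by have := hlt 4 (by omega) (by omega); omega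
  have hd4 : 2 ≤ d 4 := by
    by_contra! hd4
    have := sum_range_le_sum_range_add (k := 4) (c := 1) h.four_le fun i hi hin =>
      (h.antitone 4 i hi hin).trans (by omega)
    simp only [sum_range_succ, sum_range_zero, h.sum_eq] at this
    have := h.antitone 0 1 (by omega) (by omega)
    have := h.antitone 1 2 (by omega) (by omega)
    have := h.antitone 2 3 (by omega) (by omega)
    omega
  have : m ≠ 4 := by rintro rfl; omega
  omega

theorem exists_update_of_leaf :
    ∃ j < m, 2 ≤ d j ∧ TricyclicCriterion m (Function.update d j (d j - 1)) := by
  classical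
  have hm := h.four_le_of_leaf hleaf
  have hd0 := h.three_le_zero
  have hd1 := h.le_sub_one_of_leaf hleaf
  -- `j` is the last index with `d j = d 0`, so lowering `d j` keeps `d` nonincreasing
  set j := Nat.findGreatest (fun i => d i = d 0) m
  have hjd : d j = d 0 := Nat.findGreatest_spec (P := fun i => d i = d 0) (Nat.zero_le m) rfl
  have hjm : j < m := (Nat.findGreatest_le m).lt_of_ne fun hjm : j = m => by rw [hjm] at hjd; omega
  have hlt (k : ℕ) (hjk : j < k) (hk : k ≤ m) : d k < d 0 :=
    (h.antitone 0 k (Nat.zero_le k) (by omega)).lt_of_ne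
      (Nat.findGreatest_is_greatest (P := fun i => d i = d 0) hjk hk)
  refine ⟨j, hjm, by omega, ⟨fun i hi => ?_, fun i hi => ?_,
    Function.update_sub_one_antitone (fun i k hik hk => h.antitone i k hik (by omega))
      (fun k hjk hk => hjd ▸ hlt k hjk hk.le), hm, ?_, h.large_update hleaf hjd hlt⟩⟩
  · rcases eq_or_ne i j with rfl | hij
    · rw [Function.update_self]; omega
    · rw [Function.update_of_ne hij]; exact h.one_le i (by omega)
  · rcases eq_or_ne i j with rfl | hij
    · rw [Function.update_self]; have := h.le_sub_one 0 (by omega); omega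
    rw [Function.update_of_ne hij]
    rcases Nat.eq_zero_or_pos i with rfl | hi0
    · have := h.antitone 1 j (by omega) (by omega); omega
    · have := h.antitone 1 i hi0 (by omega); omega
  · have := sum_range_update_sub_one_add_one hjm (by omega : 1 ≤ d j)
    have := h.sum_eq
    rw [sum_range_succ] at this
    omega

end Leaf

theorem exists_connected_hasDegrees (h : TricyclicCriterion n d) :
    ∃ G : SimpleGraph (Fin n), G.Connected ∧ G.HasDegrees d := by
  induction n generalizing d with
  | zero => exact absurd h.four_le (by norm_num)
  | succ m ih =>
    rcases (h.one_le m (by omega)).eq_or_lt with hleaf | hlast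
    · obtain ⟨j, hj, hdj, h'⟩ := h.exists_update_of_leaf hleaf.symm
      obtain ⟨G, hG, hGd⟩ := ih h'
      exact ⟨G.addVertex {⟨j, hj⟩}, hG.addVertex (mem_singleton_self _),
        hGd.addLeaf (show 1 ≤ d j by omega) hleaf.symm⟩
    have h2 (i : ℕ) (hi : i < m + 1) : 2 ≤ d i :=
      hlast.trans_le (h.antitone i m (by omega) (by omega))
    have hd0 := h.three_le_zero
    obtain ⟨hs, hpad⟩ := h.mem_baseShapes h2
    obtain ⟨B, hB, hBd⟩ := exists_base _ hs
    obtain ⟨G, hG, hGd⟩ := exists_connected_hasDegrees_of_eq_two (N := d 0 + 1) (n := m + 1)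
      (by omega) (by have := h.le_sub_one 0 (by omega); omega) hB hBd
      fun i hi _ => padTwo_eq_two (i := i) _ (by omega)
    exact ⟨G, hG, hGd.congr fun i hi => (hpad i hi).symm⟩

end TricyclicCriterion

/-- Characterization of degree sequences of tricyclic graphs. -/
theorem tricyclic_degree_sequence_characterization (n : ℕ) (d : ℕ → ℕ)
    (hpos : ∀ i, i < n → 1 ≤ d i)
    (hub : ∀ i, i < n → d i ≤ n - 1)
    (hmono : ∀ i j, i ≤ j → j < n → d j ≤ d i) :
    (∃ G : SimpleGraph (Fin n),
        G.Connected ∧ G.edgeSet.ncard = n + 2 ∧ IsDegreeSequence G d) ↔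
      (4 ≤ n ∧ ∑ i ∈ Finset.range n, d i = 2 * (n + 2) ∧ ((5 ≤ n ∧ 2 ≤ d 4) ∨ 3 ≤ d 3)) := by
  constructor
  · rintro ⟨G, -, hE, hG⟩
    exact tricyclic_conditions_of_isDegreeSequence hmono hE hG
  · rintro ⟨hn, hsum, hlarge⟩
    obtain ⟨G, hG, hGd⟩ :=
      TricyclicCriterion.exists_connected_hasDegrees ⟨hpos, hub, hmono, hn, hsum, hlarge⟩
    have := hGd.isDegreeSequence.sum_range_eq
    exact ⟨G, hG, by omega, hGd.isDegreeSequence⟩
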